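/- If every triangle in a geodesic metric space X whose vertices lie on a fixed (1,c)-quasi-geodesic γ and whose sides are geodesics is λ'-thin, then γ is at Hausdorff distance at most H from any geodesic connecting its endpoints, where H is bounded linearly in λ' + c (with multiplicative constant independent of λ', c ≥ 1). -/

import Mathlib

/-!
Bisecting the parameter interval and applying thinness to the triangle `γ u, γ m, γ v` with `m`
the midpoint shows that a geodesic between points of `γ` at parameter distance `lam * 2 ^ n`
stays within `(n + 1) * lam + c` of `γ`.

Let `x₀` be a point of `α` farthest from `γ`, at distance `D`. Walking `2 * D` back and forth
along `α` from `x₀` and moving to `γ` gives parameters `u, v` with `|u - v| ≤ 6 * D + c`, and two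
applications of thinness move `x₀` to within `2 * lam` of a geodesic from `γ u` to `γ v`. So
`D ≤ lam * log₂ (D / lam) + O(lam + c)`, which forces `D ≤ 10 * (lam + c)`.

Conversely, by connectedness of `α` some two points of `α` at distance `< 1` are close to `γ`
before and after a given parameter `t`; as `γ` is a `(1, c)`-quasi-geodesic, `γ t` is then close
to `α`.
-/

open Metric Set

/-- `γ` restricted to `[a,b]` is a geodesic (isometric embedding of the interval). -/
def IsGeodesicOn {X : Type*} [MetricSpace X] (γ : ℝ → X) (a b : ℝ) : Prop :=
  ∀ s ∈ Set.Icc a b, ∀ t ∈ Set.Icc a b, dist (γ s) (γ t) = |s - t|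

/-- A geodesic metric space: any two points are joined by a geodesic. -/
def GeodesicSpace (X : Type*) [MetricSpace X] : Prop :=
  ∀ x y : X, ∃ γ : ℝ → X, γ 0 = x ∧ γ (dist x y) = y ∧ IsGeodesicOn γ 0 (dist x y)

section

variable {X : Type*} [MetricSpace X]

structure IsGeodesicSegment (g : ℝ → X) (x y : X) : Prop where
  isGeodesicOn : IsGeodesicOn g 0 (dist x y)
  apply_zero : g 0 = x
  apply_dist : g (dist x y) = y

def IsQuasiGeodesicOn (γ : ℝ → X) (c a b : ℝ) : Prop :=
  ∀ s ∈ Icc a b, ∀ t ∈ Icc a b,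
    |s - t| - c ≤ dist (γ s) (γ t) ∧ dist (γ s) (γ t) ≤ |s - t| + c

def ThinTrianglesOn (γ : ℝ → X) (lam a b : ℝ) : Prop :=
  ∀ u ∈ Icc a b, ∀ v ∈ Icc a b, ∀ w ∈ Icc a b, ∀ g₁ g₂ g₃ : ℝ → X,
    IsGeodesicSegment g₁ (γ u) (γ v) → IsGeodesicSegment g₂ (γ v) (γ w) →
    IsGeodesicSegment g₃ (γ u) (γ w) →
    ∀ z ∈ g₃ '' Icc 0 (dist (γ u) (γ w)),
      ∃ y ∈ g₁ '' Icc 0 (dist (γ u) (γ v)) ∪ g₂ '' Icc 0 (dist (γ v) (γ w)), dist z y ≤ lam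

lemma GeodesicSpace.exists_isGeodesicSegment (hX : GeodesicSpace X) (x y : X) :
    ∃ g : ℝ → X, IsGeodesicSegment g x y :=
  let ⟨g, h0, h1, hg⟩ := hX x y
  ⟨g, hg, h0, h1⟩

lemma IsGeodesicOn.continuousOn {g : ℝ → X} {a b : ℝ} (h : IsGeodesicOn g a b) :
    ContinuousOn g (Icc a b) :=
  (LipschitzOnWith.of_dist_le_mul (K := 1) fun s hs t ht => by
    rw [h s hs t ht, NNReal.coe_one, one_mul, Real.dist_eq]).continuousOn

lemma IsCompact.exists_dist_le_of_infDist_le {s : Set X} (hs : IsCompact s) (hne : s.Nonempty)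
    {x : X} {r : ℝ} (h : infDist x s ≤ r) : ∃ y ∈ s, dist x y ≤ r :=
  let ⟨y, hy, hxy⟩ := hs.exists_infDist_eq_dist hne x
  ⟨y, hy, hxy ▸ h⟩

lemma IsPreconnected.exists_dist_lt {S A B : Set X} (hS : IsPreconnected S)
    (hcover : S ⊆ A ∪ B) (hA : (S ∩ A).Nonempty) (hB : (S ∩ B).Nonempty) {ε : ℝ}
    (hε : 0 < ε) : ∃ p ∈ A, ∃ q ∈ B, dist p q < ε := by
  obtain ⟨x, -, hxA, hxB⟩ := isPreconnected_closed_iff.1 hS _ _ isClosed_closure isClosed_closure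
    (hcover.trans (union_subset_union subset_closure subset_closure))
    (hA.mono (inter_subset_inter_right _ subset_closure))
    (hB.mono (inter_subset_inter_right _ subset_closure))
  obtain ⟨p, hp, hxp⟩ := mem_closure_iff.1 hxA (ε / 2) (half_pos hε)
  obtain ⟨q, hq, hxq⟩ := mem_closure_iff.1 hxB (ε / 2) (half_pos hε)
  exact ⟨p, hp, q, hq, by linarith [dist_triangle_left p q x]⟩

namespace IsGeodesicSegment

variable {g : ℝ → X} {x y : X}

lemma start_mem_image (hg : IsGeodesicSegment g x y) : x ∈ g '' Icc 0 (dist x y) :=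
  ⟨0, left_mem_Icc.2 dist_nonneg, hg.apply_zero⟩

lemma isCompact_image (hg : IsGeodesicSegment g x y) : IsCompact (g '' Icc 0 (dist x y)) :=
  isCompact_Icc.image_of_continuousOn hg.isGeodesicOn.continuousOn

lemma dist_apply_start (hg : IsGeodesicSegment g x y) {s : ℝ} (hs : s ∈ Icc 0 (dist x y)) :
    dist (g s) x = s := by
  rw [← hg.apply_zero, hg.isGeodesicOn s hs 0 (left_mem_Icc.2 dist_nonneg), sub_zero,
    abs_of_nonneg hs.1]

lemma dist_start_le (hg : IsGeodesicSegment g x y) {z : X} (hz : z ∈ g '' Icc 0 (dist x y)) :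
    dist z x ≤ dist x y := by
  obtain ⟨s, hs, rfl⟩ := hz
  exact (hg.dist_apply_start hs).trans_le hs.2

lemma symm (hg : IsGeodesicSegment g x y) :
    IsGeodesicSegment (fun s => g (dist x y - s)) y x where
  isGeodesicOn s hs t ht := by
    rw [dist_comm y x] at hs ht
    rw [hg.isGeodesicOn _ ⟨by linarith [hs.2], by linarith [hs.1]⟩ _
      ⟨by linarith [ht.2], by linarith [ht.1]⟩, sub_sub_sub_cancel_left, abs_sub_comm]
  apply_zero := by simpa using hg.apply_dist
  apply_dist := by simpa [dist_comm y x] using hg.apply_zero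

lemma image_symm (g : ℝ → X) (x y : X) :
    (fun s => g (dist x y - s)) '' Icc 0 (dist y x) = g '' Icc 0 (dist x y) := by
  rw [show (fun s => g (dist x y - s)) = g ∘ fun s => dist x y - s from rfl, image_comp,
    image_const_sub_Icc, dist_comm y x, sub_self, sub_zero]

lemma dist_end_le (hg : IsGeodesicSegment g x y) {z : X} (hz : z ∈ g '' Icc 0 (dist x y)) :
    dist z y ≤ dist x y := by
  simpa [dist_comm y x] using hg.symm.dist_start_le (by rwa [image_symm])

/-- `p` is `x` itself, or a point of `Γ` within `D` of the point `2 * D` before `x₀`. -/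
lemma exists_mem_dist_le_three_mul (hg : IsGeodesicSegment g x y) {Γ : Set X} {D : ℝ}
    {x₀ : X} (hx₀ : x₀ ∈ g '' Icc 0 (dist x y)) (hx : x ∈ Γ)
    (hnear : ∀ z ∈ g '' Icc 0 (dist x y), ∃ p ∈ Γ, dist z p ≤ D)
    (hfar : ∀ p ∈ Γ, D ≤ dist x₀ p) :
    ∃ p ∈ Γ, dist x₀ p ≤ 3 * D ∧ ∀ z, dist z x ≤ dist x p → D ≤ dist x₀ z := by
  obtain ⟨s₀, hs₀, rfl⟩ := hx₀
  have hD : 0 ≤ D := by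
    obtain ⟨p, -, hp⟩ := hnear _ (mem_image_of_mem g hs₀)
    exact dist_nonneg.trans hp
  have hx₀x := hg.dist_apply_start hs₀
  rcases le_or_gt s₀ (2 * D) with hs | hs
  · refine ⟨x, hx, by linarith, fun z hz => ?_⟩
    rw [dist_self, dist_le_zero] at hz
    exact hz ▸ hfar x hx
  · have hw : s₀ - 2 * D ∈ Icc 0 (dist x y) := ⟨by linarith, by linarith [hs₀.2]⟩
    obtain ⟨p, hp, hwp⟩ := hnear _ (mem_image_of_mem g hw)
    have hx₀w : dist (g s₀) (g (s₀ - 2 * D)) = 2 * D := by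
      rw [hg.isGeodesicOn _ hs₀ _ hw, sub_sub_cancel, abs_of_nonneg (by linarith)]
    have hwx := hg.dist_apply_start hw
    refine ⟨p, hp, by linarith [dist_triangle (g s₀) (g (s₀ - 2 * D)) p], fun z hz => ?_⟩
    linarith [dist_triangle_left x p (g (s₀ - 2 * D)), dist_triangle (g s₀) z x]

end IsGeodesicSegment

section QuasiGeodesic

variable {γ α : ℝ → X} {lam c a b : ℝ}

lemma seven_mul_add_four_lt_two_pow {n : ℕ} (hn : 7 ≤ n) : 7 * (n + 4) < 2 ^ n := by
  induction n, hn using Nat.le_induction with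
  | base => norm_num
  | succ n hn ih => rw [pow_succ]; omega

lemma le_of_forall_le_mul_two_pow {D : ℝ} (hlam : 0 < lam) (hc : 0 ≤ c)
    (h : ∀ n : ℕ, 6 * D + c ≤ lam * 2 ^ n → D ≤ (n + 3) * lam + c) : D ≤ 10 * (lam + c) := by
  by_contra! hD
  obtain ⟨n, hn, hn'⟩ := exists_nat_pow_near (x := (6 * D + c) / lam) (y := (2 : ℝ))
    (by rw [le_div_iff₀ hlam]; linarith) one_lt_two
  rw [le_div_iff₀' hlam] at hn
  rw [div_lt_iff₀' hlam] at hn'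
  have hDn := h (n + 1) hn'.le
  push_cast at hDn
  have h7 : 7 ≤ n := by
    have : (6 : ℝ) < n := by nlinarith
    exact_mod_cast this
  have hpow : (7 * ((n : ℝ) + 4)) < 2 ^ n := by exact_mod_cast seven_mul_add_four_lt_two_pow h7
  nlinarith [mul_lt_mul_of_pos_left hpow hlam]

theorem ThinTrianglesOn.infDist_le_of_abs_sub_le_mul_two_pow (hX : GeodesicSpace X)
    (hthin : ThinTrianglesOn γ lam a b)
    (hγ : ∀ s ∈ Icc a b, ∀ t ∈ Icc a b, dist (γ s) (γ t) ≤ |s - t| + c) (n : ℕ) :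
    ∀ u ∈ Icc a b, ∀ v ∈ Icc a b, |u - v| ≤ lam * 2 ^ n →
      ∀ g : ℝ → X, IsGeodesicSegment g (γ u) (γ v) → ∀ z ∈ g '' Icc 0 (dist (γ u) (γ v)),
        infDist z (γ '' Icc a b) ≤ (n + 1) * lam + c := by
  induction n with
  | zero =>
    intro u hu v hv huv g hg z hz
    calc infDist z (γ '' Icc a b) ≤ dist z (γ u) :=
          infDist_le_dist_of_mem (mem_image_of_mem γ hu)
      _ ≤ dist (γ u) (γ v) := hg.dist_start_le hz
      _ ≤ |u - v| + c := hγ u hu v hv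
      _ ≤ _ := by simpa using huv
  | succ n ih =>
    intro u hu v hv huv g hg z hz
    set m := (u + v) / 2 with hm_def
    have hm : m ∈ Icc a b := ⟨by linarith [hu.1, hv.1], by linarith [hu.2, hv.2]⟩
    have hhalf : |u - m| ≤ lam * 2 ^ n ∧ |m - v| ≤ lam * 2 ^ n := by
      rw [show u - m = (u - v) / 2 by ring, show m - v = (u - v) / 2 by ring, abs_div, abs_two]
      rw [pow_succ] at huv
      constructor <;> linarith
    obtain ⟨g₁, hg₁⟩ := hX.exists_isGeodesicSegment (γ u) (γ m)
    obtain ⟨g₂, hg₂⟩ := hX.exists_isGeodesicSegment (γ m) (γ v)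
    obtain ⟨w, hw, hzw⟩ := hthin u hu m hm v hv g₁ g₂ g hg₁ hg₂ hg z hz
    have hw' : infDist w (γ '' Icc a b) ≤ (n + 1) * lam + c := by
      rcases hw with hw | hw
      · exact ih u hu m hm hhalf.1 g₁ hg₁ w hw
      · exact ih m hm v hv hhalf.2 g₂ hg₂ w hw
    push_cast
    linarith [infDist_le_infDist_add_dist (s := γ '' Icc a b) (x := z) (y := w)]

/-- The point `x₀` is first pushed onto the side `[γ u, γ b]` of the triangle `γ a, γ u, γ b`,
then onto the side `[γ u, γ v]` of the triangle `γ u, γ v, γ b`: the other sides lie in balls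
about `γ a` and `γ b` that stay `D > 2 * lam` away from `x₀`. -/
lemma ThinTrianglesOn.exists_segment_near_of_far (hX : GeodesicSpace X)
    (hthin : ThinTrianglesOn γ lam a b) (hγ : IsQuasiGeodesicOn γ c a b) (hab : a ≤ b)
    (hα : IsGeodesicSegment α (γ a) (γ b)) {x₀ : X} {D : ℝ}
    (hx₀ : x₀ ∈ α '' Icc 0 (dist (γ a) (γ b)))
    (hnear : ∀ x ∈ α '' Icc 0 (dist (γ a) (γ b)), ∃ p ∈ γ '' Icc a b, dist x p ≤ D)
    (hfar : ∀ p ∈ γ '' Icc a b, D ≤ dist x₀ p) (hD : 2 * lam < D) :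
    ∃ u ∈ Icc a b, ∃ v ∈ Icc a b, |u - v| ≤ 6 * D + c ∧ ∃ g : ℝ → X,
      IsGeodesicSegment g (γ u) (γ v) ∧
        ∃ z ∈ g '' Icc 0 (dist (γ u) (γ v)), dist x₀ z ≤ 2 * lam := by
  have ha := left_mem_Icc.2 hab
  have hb := right_mem_Icc.2 hab
  obtain ⟨_, ⟨u, hu, rfl⟩, hx₀u, hfar_u⟩ :=
    hα.exists_mem_dist_le_three_mul hx₀ (mem_image_of_mem γ ha) hnear hfar
  obtain ⟨_, ⟨v, hv, rfl⟩, hx₀v, hfar_v⟩ :=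
    hα.symm.exists_mem_dist_le_three_mul (by rwa [IsGeodesicSegment.image_symm])
      (mem_image_of_mem γ hb) (by rwa [IsGeodesicSegment.image_symm]) hfar
  obtain ⟨g₁, hg₁⟩ := hX.exists_isGeodesicSegment (γ a) (γ u)
  obtain ⟨h, hh⟩ := hX.exists_isGeodesicSegment (γ u) (γ b)
  obtain ⟨k₁, hk₁⟩ := hX.exists_isGeodesicSegment (γ u) (γ v)
  obtain ⟨k₂, hk₂⟩ := hX.exists_isGeodesicSegment (γ v) (γ b)
  obtain ⟨x₁, hx₁, hx₀x₁⟩ := hthin a ha u hu b hb g₁ h α hg₁ hh hα x₀ hx₀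
  replace hx₁ := hx₁.resolve_left fun hx₁ => by
    linarith [hfar_u x₁ (hg₁.dist_start_le hx₁), dist_nonneg (x := x₀) (y := x₁)]
  obtain ⟨x₂, hx₂, hx₁x₂⟩ := hthin u hu v hv b hb k₁ k₂ h hk₁ hk₂ hh x₁ hx₁
  have hx₀x₂ : dist x₀ x₂ ≤ 2 * lam := by linarith [dist_triangle x₀ x₁ x₂]
  replace hx₂ := hx₂.resolve_right fun hx₂ => by
    linarith [hfar_v x₂ (by rw [dist_comm (γ b)]; exact hk₂.dist_end_le hx₂)]
  refine ⟨u, hu, v, hv, ?_, k₁, hk₁, x₂, hx₂, hx₀x₂⟩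
  linarith [(hγ u hu v hv).1, dist_triangle_left (γ u) (γ v) x₀]

theorem ThinTrianglesOn.exists_dist_le_of_mem_segment (hX : GeodesicSpace X)
    (hthin : ThinTrianglesOn γ lam a b) (hγ : IsQuasiGeodesicOn γ c a b)
    (hγc : ContinuousOn γ (Icc a b)) (hab : a ≤ b) (hlam : 0 < lam) (hc : 0 ≤ c)
    (hα : IsGeodesicSegment α (γ a) (γ b)) :
    ∀ x ∈ α '' Icc 0 (dist (γ a) (γ b)), ∃ τ ∈ Icc a b, dist x (γ τ) ≤ 10 * (lam + c) := by
  set Γ := γ '' Icc a b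
  have hΓ : IsCompact Γ := isCompact_Icc.image_of_continuousOn hγc
  have hΓne : Γ.Nonempty := (nonempty_Icc.2 hab).image γ
  obtain ⟨x₀, hx₀, hmax⟩ := hα.isCompact_image.exists_isMaxOn ⟨γ a, hα.start_mem_image⟩
    (continuous_infDist_pt Γ).continuousOn
  suffices hD : infDist x₀ Γ ≤ 10 * (lam + c) by
    rintro x hx
    obtain ⟨_, ⟨τ, hτ, rfl⟩, h⟩ := hΓ.exists_dist_le_of_infDist_le hΓne ((hmax hx).trans hD)
    exact ⟨τ, hτ, h⟩
  refine le_of_forall_le_mul_two_pow hlam hc fun n hn => ?_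
  rcases le_or_gt (infDist x₀ Γ) (2 * lam) with hD | hD
  · have : 0 ≤ (n : ℝ) * lam := by positivity
    linarith
  obtain ⟨u, hu, v, hv, huv, g, hg, z, hz, hx₀z⟩ := hthin.exists_segment_near_of_far hX hγ hab hα
    hx₀ (fun x hx => hΓ.exists_dist_le_of_infDist_le hΓne (hmax hx))
    (fun p hp => infDist_le_dist_of_mem hp) hD
  have hz := hthin.infDist_le_of_abs_sub_le_mul_two_pow hX (fun s hs t ht => (hγ s hs t ht).2) n
    u hu v hv (huv.trans hn) g hg z hz
  linarith [infDist_le_infDist_add_dist (s := Γ) (x := x₀) (y := z)]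

theorem IsQuasiGeodesicOn.exists_dist_le_of_segment (hγ : IsQuasiGeodesicOn γ c a b)
    (hα : IsGeodesicSegment α (γ a) (γ b)) {H : ℝ}
    (hnear : ∀ x ∈ α '' Icc 0 (dist (γ a) (γ b)), ∃ τ ∈ Icc a b, dist x (γ τ) ≤ H)
    {t : ℝ} (ht : t ∈ Icc a b) :
    ∃ x ∈ α '' Icc 0 (dist (γ a) (γ b)), dist (γ t) x ≤ 3 * H + 2 * c + 1 := by
  set L := dist (γ a) (γ b)
  have hH : 0 ≤ H := by
    obtain ⟨τ, -, h⟩ := hnear _ hα.start_mem_image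
    exact dist_nonneg.trans h
  set A := {s ∈ Icc 0 L | ∃ τ ∈ Icc a t, dist (α s) (γ τ) ≤ H}
  set B := {s ∈ Icc 0 L | ∃ τ ∈ Icc t b, dist (α s) (γ τ) ≤ H}
  have hcover : Icc 0 L ⊆ A ∪ B := fun s hs => by
    obtain ⟨τ, hτ, hsτ⟩ := hnear _ (mem_image_of_mem α hs)
    rcases le_total τ t with h | h
    · exact .inl ⟨hs, τ, ⟨hτ.1, h⟩, hsτ⟩
    · exact .inr ⟨hs, τ, ⟨h, hτ.2⟩, hsτ⟩
  have h0 : 0 ∈ A :=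
    ⟨left_mem_Icc.2 dist_nonneg, a, ⟨le_rfl, ht.1⟩, by rwa [hα.apply_zero, dist_self]⟩
  have hL : L ∈ B :=
    ⟨right_mem_Icc.2 dist_nonneg, b, ⟨ht.2, le_rfl⟩, by rwa [hα.apply_dist, dist_self]⟩
  obtain ⟨s, ⟨hs, τ₁, hτ₁, hsτ₁⟩, s', ⟨hs', τ₂, hτ₂, hs'τ₂⟩, hss'⟩ :=
    isPreconnected_Icc.exists_dist_lt hcover ⟨0, h0.1, h0⟩ ⟨L, hL.1, hL⟩ one_pos
  have hτ₁' : τ₁ ∈ Icc a b := ⟨hτ₁.1, hτ₁.2.trans ht.2⟩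
  have hτ₂' : τ₂ ∈ Icc a b := ⟨ht.1.trans hτ₂.1, hτ₂.2⟩
  have hαα : dist (α s) (α s') < 1 := by rwa [hα.isGeodesicOn s hs s' hs', ← Real.dist_eq]
  have hτ : τ₂ - τ₁ ≤ 2 * H + 1 + c := by
    have := (hγ τ₁ hτ₁' τ₂ hτ₂').1
    rw [abs_of_nonpos (by linarith [hτ₁.2, hτ₂.1])] at this
    linarith [dist_triangle4 (γ τ₁) (α s) (α s') (γ τ₂), dist_comm (γ τ₁) (α s)]
  have htτ₁ := (hγ t ht τ₁ hτ₁').2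
  rw [abs_of_nonneg (by linarith [hτ₁.2])] at htτ₁
  refine ⟨α s, mem_image_of_mem α hs, ?_⟩
  linarith [dist_triangle (γ t) (γ τ₁) (α s), dist_comm (γ τ₁) (α s), hτ₂.1]

end QuasiGeodesic

end

/-- quantitative Morse lemma. There is a universal constant `A` such
that if every geodesic triangle with vertices on a continuous `(1,c)`-quasi-geodesic
`γ` is `λ'`-thin (`λ', c ≥ 1`), then `γ` is at Hausdorff distance at most
`A * (λ' + c)` from any geodesic joining its endpoints. -/
theorem stmt19 :
    ∃ A : ℝ, ∀ (X : Type) [MetricSpace X], GeodesicSpace X →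
      ∀ lam c : ℝ, 1 ≤ lam → 1 ≤ c →
      ∀ a b : ℝ, a ≤ b → ∀ γ : ℝ → X, ContinuousOn γ (Set.Icc a b) →
      (∀ s ∈ Set.Icc a b, ∀ t ∈ Set.Icc a b,
        |s - t| - c ≤ dist (γ s) (γ t) ∧ dist (γ s) (γ t) ≤ |s - t| + c) →
      -- every geodesic triangle with vertices on γ is lam-thin:
      (∀ u ∈ Set.Icc a b, ∀ v ∈ Set.Icc a b, ∀ w ∈ Set.Icc a b,
        ∀ g₁ g₂ g₃ : ℝ → X,
        IsGeodesicOn g₁ 0 (dist (γ u) (γ v)) → g₁ 0 = γ u → g₁ (dist (γ u) (γ v)) = γ v →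
        IsGeodesicOn g₂ 0 (dist (γ v) (γ w)) → g₂ 0 = γ v → g₂ (dist (γ v) (γ w)) = γ w →
        IsGeodesicOn g₃ 0 (dist (γ u) (γ w)) → g₃ 0 = γ u → g₃ (dist (γ u) (γ w)) = γ w →
        (∀ z ∈ g₁ '' Set.Icc 0 (dist (γ u) (γ v)),
          Metric.infDist z (g₂ '' Set.Icc 0 (dist (γ v) (γ w)) ∪
            g₃ '' Set.Icc 0 (dist (γ u) (γ w))) ≤ lam) ∧
        (∀ z ∈ g₂ '' Set.Icc 0 (dist (γ v) (γ w)),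
          Metric.infDist z (g₁ '' Set.Icc 0 (dist (γ u) (γ v)) ∪
            g₃ '' Set.Icc 0 (dist (γ u) (γ w))) ≤ lam) ∧
        (∀ z ∈ g₃ '' Set.Icc 0 (dist (γ u) (γ w)),
          Metric.infDist z (g₁ '' Set.Icc 0 (dist (γ u) (γ v)) ∪
            g₂ '' Set.Icc 0 (dist (γ v) (γ w))) ≤ lam)) →
      ∀ α : ℝ → X, IsGeodesicOn α 0 (dist (γ a) (γ b)) →
        α 0 = γ a → α (dist (γ a) (γ b)) = γ b →
        Metric.hausdorffDist (γ '' Set.Icc a b) (α '' Set.Icc 0 (dist (γ a) (γ b)))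
          ≤ A * (lam + c) := by
  refine ⟨33, fun X _ hX lam c hlam hc a b hab γ hγc hγ thin α hα hα0 hαL => ?_⟩
  have hγ' : IsQuasiGeodesicOn γ c a b := hγ
  have hαseg : IsGeodesicSegment α (γ a) (γ b) := ⟨hα, hα0, hαL⟩
  have hthin : ThinTrianglesOn γ lam a b := by
    intro u hu v hv w hw g₁ g₂ g₃ hg₁ hg₂ hg₃ z hz
    refine (hg₁.isCompact_image.union hg₂.isCompact_image).exists_dist_le_of_infDist_le
      ⟨γ u, .inl hg₁.start_mem_image⟩ ?_
    exact (thin u hu v hv w hw g₁ g₂ g₃ hg₁.isGeodesicOn hg₁.apply_zero hg₁.apply_dist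
      hg₂.isGeodesicOn hg₂.apply_zero hg₂.apply_dist
      hg₃.isGeodesicOn hg₃.apply_zero hg₃.apply_dist).2.2 z hz
  have hαγ := hthin.exists_dist_le_of_mem_segment hX hγ' hγc hab (by linarith) (by linarith) hαseg
  refine hausdorffDist_le_of_infDist (by linarith) (fun x hx => ?_) fun x hx => ?_
  · obtain ⟨t, ht, rfl⟩ := hx
    obtain ⟨y, hy, hty⟩ := hγ'.exists_dist_le_of_segment hαseg hαγ ht
    exact (infDist_le_dist_of_mem hy).trans (by linarith)
  · obtain ⟨τ, hτ, hxτ⟩ := hαγ x hx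
    exact (infDist_le_dist_of_mem (mem_image_of_mem γ hτ)).trans (by linarith)
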